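/- arXiv:1602.00574 — 15 statements merged into one kernel-verified Lean document; each statement's English description precedes it below -/
import Mathlib

section
/- For every natural number n, the polynomial D_n(x) := ∑_{k=0}^n C(n,k)² x^k (x+1)^{n-k} equals ∑_{k=0}^n C(n,k) C(n+k,k) x^k. -/
open Finset Polynomial

/-
Comparing coefficients of `X ^ m`, the left side contributes
`∑ₖ C(n,k)² C(n-k, m-k)`. Since `C(n,k) C(n-k, m-k) = C(n,m) C(m,k)`, this is
`C(n,m) ∑ₖ C(n,k) C(m,k)`, and Vandermonde's identity turns the last sum into `C(n+m, m)`.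
-/

namespace Nat

theorem add_choose_eq_sum_choose_mul_choose (n m : ℕ) :
    (n + m).choose m = ∑ k ∈ range (m + 1), n.choose k * m.choose k := by
  rw [add_choose_eq, Finset.Nat.sum_antidiagonal_eq_sum_range_succ_mk]
  refine sum_congr rfl fun k hk => ?_
  rw [choose_symm (mem_range_succ_iff.mp hk)]

theorem sum_choose_sq_mul_choose_sub (n m : ℕ) :
    ∑ k ∈ range (m + 1), n.choose k ^ 2 * (n - k).choose (m - k) =
      n.choose m * (n + m).choose m := by
  rw [add_choose_eq_sum_choose_mul_choose, mul_sum]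
  refine sum_congr rfl fun k hk => ?_
  rw [sq, mul_assoc, ← choose_mul (mem_range_succ_iff.mp hk)]
  ring

end Nat

namespace Polynomial

theorem coeff_C_mul_X_pow_mul_X_add_one_pow {R : Type*} [Semiring R] (a : R) (k j m : ℕ) :
    (C a * X ^ k * (X + 1) ^ j).coeff m = if k ≤ m then a * (j.choose (m - k) : R) else 0 := by
  rw [mul_assoc, coeff_C_mul, coeff_X_pow_mul', coeff_X_add_one_pow]
  split_ifs <;> simp

end Polynomial

theorem delannoy_poly_alt (n : ℕ) :
    (∑ k ∈ range (n + 1), (C ((n.choose k : ℚ))^2 * X ^ k * (X + 1) ^ (n - k))) =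
    ∑ k ∈ range (n + 1), C ((n.choose k : ℚ) * ((n + k).choose k : ℚ)) * X ^ k := by
  ext m
  simp only [finsetSum_coeff, ← C_pow, coeff_C_mul_X_pow_mul_X_add_one_pow, coeff_C_mul_X_pow,
    sum_ite_eq, ← sum_filter]
  have hrange : ∑ k ∈ range (n + 1) with k ≤ m, ((n.choose k : ℚ) ^ 2 * ((n - k).choose (m - k)))
      = ∑ k ∈ range (m + 1), (n.choose k : ℚ) ^ 2 * ((n - k).choose (m - k)) := by
    refine sum_subset (fun k hk => ?_) fun k _ hk => ?_
    · simp_all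
    · simp_all [Nat.choose_eq_zero_of_lt]
  have hcoeff := Nat.sum_choose_sq_mul_choose_sub n m
  rw [hrange]
  split_ifs with hm
  · exact_mod_cast hcoeff
  · rw [Nat.choose_eq_zero_of_lt (by simpa using hm), zero_mul] at hcoeff
    exact_mod_cast hcoeff
end

section
/- For every positive integer n, (x+1)·s_n(x) = S_n(x), where s_n(x) = ∑_{k=1}^n N(n,k) x^{k-1}(x+1)^{n-k} with N(n,k) = (1/n) C(n,k) C(n,k-1), and S_n(x) = ∑_{k=0}^n C(n,k) C(n+k,k) x^k/(k+1). -/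
/-!
Multiplying by `X + 1` turns the `k`-th summand into `N(n, j + 1) X^j (X + 1)^(n - j)` with
`j = k - 1`. Trinomial revision `C(n,j) C(n-j,m-j) = C(n,m) C(m,j)` makes the coefficient of `X^m`
equal to `C(n,m)/n · ∑ⱼ C(m,j) C(n,j+1)`, and by Vandermonde this sum is
`C(n+m, m+1) = C(n+m, m) · n/(m+1)`.
-/

open Finset Polynomial

theorem Nat.sum_range_choose_mul_choose_succ (m n : ℕ) :
    ∑ j ∈ range n, m.choose j * n.choose (j + 1) = (m + n).choose (m + 1) := by
  cases n with
  | zero => simp [Nat.choose_eq_zero_of_lt]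
  | succ n =>
    rw [Nat.choose_symm_of_eq_add (b := n) (by omega), Nat.add_choose_eq,
      Nat.sum_antidiagonal_eq_sum_range_succ_mk]
    refine sum_congr rfl fun j hj => ?_
    rw [Nat.choose_symm_of_eq_add (a := n - j) (b := j + 1) (by grind)]

theorem Polynomial.choose_mul_coeff_X_pow_mul_X_add_one_pow {R : Type*} [Semiring R]
    (n j m : ℕ) :
    (n.choose j : R) * (X ^ j * (X + 1) ^ (n - j) : R[X]).coeff m = n.choose m * m.choose j := by
  rw [coeff_X_pow_mul', coeff_X_add_one_pow]
  split_ifs with hjm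
  · rw [← Nat.cast_mul, ← Nat.cast_mul, Nat.choose_mul hjm]
  · simp [Nat.choose_eq_zero_of_lt (not_le.mp hjm)]

theorem Nat.cast_choose_add_succ_right {K : Type*} [DivisionRing K] [CharZero K] (m n : ℕ) :
    ((m + n).choose (m + 1) : K) = (m + n).choose m * n / (m + 1) := by
  rw [eq_div_iff m.cast_add_one_ne_zero]
  have h := Nat.choose_succ_right_eq (m + n) m
  rw [Nat.add_sub_cancel_left] at h
  exact_mod_cast h

theorem sum_range_choose_succ_mul_choose_mul_choose {K : Type*} [Field K] [CharZero K]
    {n : ℕ} (hn : (n : K) ≠ 0) (m : ℕ) :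
    ∑ j ∈ range n, 1 / (n : K) * n.choose (j + 1) * (n.choose m * m.choose j) =
      n.choose m * (n + m).choose m / (m + 1) := by
  calc _ = 1 / (n : K) * n.choose m * (∑ j ∈ range n, m.choose j * n.choose (j + 1) : ℕ) := by
        rw [Nat.cast_sum, mul_sum]
        refine sum_congr rfl fun j _ => ?_
        push_cast
        ring
    _ = _ := by
        rw [Nat.sum_range_choose_mul_choose_succ, Nat.cast_choose_add_succ_right, add_comm m n]
        field_simp

theorem little_schroeder_mul (n : ℕ) (hn : 1 ≤ n) :
    (X + 1) * (∑ k ∈ Icc 1 n,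
        C ((1 / (n : ℚ)) * (n.choose k : ℚ) * (n.choose (k - 1) : ℚ)) *
          X ^ (k - 1) * (X + 1) ^ (n - k)) =
    ∑ k ∈ range (n + 1),
      C ((n.choose k : ℚ) * ((n + k).choose k : ℚ) / (k + 1 : ℚ)) * X ^ k := by
  have hn0 : (n : ℚ) ≠ 0 := Nat.cast_ne_zero.mpr (by omega)
  have hsummand : ∀ j ∈ range n, (X + 1) *
      (C (1 / (n : ℚ) * n.choose (1 + j) * n.choose (1 + j - 1)) * X ^ (1 + j - 1) *
        (X + 1) ^ (n - (1 + j))) =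
      C (1 / (n : ℚ) * n.choose (j + 1)) * (C (n.choose j : ℚ) * (X ^ j * (X + 1) ^ (n - j))) := by
    intro j hj
    rw [show n - j = n - (1 + j) + 1 by grind, add_tsub_cancel_left, add_comm 1 j]
    simp only [C_mul, map_natCast]
    ring
  rw [← Ico_add_one_right_eq_Icc, sum_Ico_eq_sum_range, add_tsub_cancel_right, mul_sum,
    sum_congr rfl hsummand]
  ext m
  simp only [finsetSum_coeff, coeff_C_mul, coeff_X_pow, mul_ite, mul_one, mul_zero, sum_ite_eq]
  rw [sum_congr rfl fun j _ => by rw [choose_mul_coeff_X_pow_mul_X_add_one_pow],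
    sum_range_choose_succ_mul_choose_mul_choose hn0]
  split_ifs with hm
  · rfl
  · simp [Nat.choose_eq_zero_of_lt (by simpa using hm : n < m)]
end

section
/- For every positive integer n, D_{n+1}(x) − D_{n−1}(x) = 2x(2n+1)·S_n(x), where D_m(x) = ∑_{k=0}^m C(m,k) C(m+k,k) x^k and S_n(x) = ∑_{k=0}^n C(n+k,2k) C_k x^k with C_k the k-th Catalan number. -/
/-!
Trinomial revision rewrites the coefficient `C(m,k) C(m+k,k)` of `D_m` as `C(m+k,2k) C(2k,k)`.
At `x^(j+1)`, two applications of Pascal's rule give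
`C(n+j+2,2j+2) - C(n+j,2j+2) = C(n+j+1,2j+1) + C(n+j,2j+1)`, and absorption turns `2j+1` times
this into `(2n+1) C(n+j,2j)`; the remaining factor is `C(2j+2,j+1) = 2(2j+1) C_j`.
-/

open Finset Polynomial

namespace Nat

theorem choose_mul_add_choose (m k : ℕ) :
    m.choose k * (m + k).choose k = (m + k).choose (2 * k) * k.centralBinom := by
  rcases le_or_gt k m with hkm | hmk
  · rw [centralBinom, choose_mul (by omega : k ≤ 2 * k), Nat.add_sub_cancel, two_mul,
      Nat.add_sub_cancel, mul_comm]
  · rw [choose_eq_zero_of_lt hmk, choose_eq_zero_of_lt (by omega : m + k < 2 * k)]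
    simp

theorem centralBinom_succ_eq_mul_catalan (j : ℕ) :
    (j + 1).centralBinom = 2 * (2 * j + 1) * catalan j := by
  apply Nat.eq_of_mul_eq_mul_left (by omega : 0 < j + 1)
  rw [succ_mul_centralBinom_succ, ← succ_mul_catalan_eq_centralBinom]
  ring

theorem choose_add_two_add_two (N s : ℕ) :
    (N + 2).choose (s + 2) = N.choose (s + 2) + ((N + 1).choose (s + 1) + N.choose (s + 1)) := by
  rw [choose_succ_succ' (N + 1), choose_succ_succ' N (s + 1)]
  ring

theorem two_mul_add_one_mul_choose_add_choose (n j : ℕ) :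
    (2 * j + 1) * ((n + j + 1).choose (2 * j + 1) + (n + j).choose (2 * j + 1)) =
      (2 * n + 1) * (n + j).choose (2 * j) := by
  rcases le_or_gt j n with hjn | hnj
  · have h₁ := add_one_mul_choose_eq (n + j) (2 * j)
    have h₂ := choose_succ_right_eq (n + j) (2 * j)
    rw [show n + j - 2 * j = n - j by omega] at h₂
    rw [show 2 * n + 1 = (n + j + 1) + (n - j) by omega]
    linarith
  · rw [choose_eq_zero_of_lt (by omega : n + j + 1 < 2 * j + 1),
      choose_eq_zero_of_lt (by omega : n + j < 2 * j + 1),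
      choose_eq_zero_of_lt (by omega : n + j < 2 * j)]
    simp

theorem choose_mul_add_choose_add_two (m j : ℕ) :
    (m + 2).choose (j + 1) * (m + 2 + (j + 1)).choose (j + 1) =
      m.choose (j + 1) * (m + (j + 1)).choose (j + 1) +
        2 * (2 * (m + 1) + 1) * ((m + 1 + j).choose (2 * j) * catalan j) := by
  rw [choose_mul_add_choose, choose_mul_add_choose, centralBinom_succ_eq_mul_catalan,
    show m + 2 + (j + 1) = m + 1 + j + 2 by omega,
    show m + (j + 1) = m + 1 + j by omega, show 2 * (j + 1) = 2 * j + 2 by ring,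
    choose_add_two_add_two]
  linear_combination (2 * catalan j) * two_mul_add_one_mul_choose_add_choose (m + 1) j

end Nat

section

variable (R : Type*) [CommRing R]

noncomputable def delannoyPoly (m : ℕ) : R[X] :=
  ∑ k ∈ range (m + 1), C ((m.choose k : R) * ((m + k).choose k : R)) * X ^ k

noncomputable def schroderPoly (n : ℕ) : R[X] :=
  ∑ k ∈ range (n + 1), C (((n + k).choose (2 * k) : R) * (catalan k : R)) * X ^ k

variable {R}

theorem delannoyPoly_eq_sum_range {m N : ℕ} (h : m ≤ N) :
    delannoyPoly R m =
      ∑ k ∈ range (N + 1), C ((m.choose k : R) * ((m + k).choose k : R)) * X ^ k := by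
  refine sum_subset (range_subset_range.2 (by omega)) fun k _ hk => ?_
  rw [mem_range, not_lt] at hk
  rw [Nat.choose_eq_zero_of_lt (by omega : m < k)]
  simp

theorem delannoyPoly_add_two_sub (m : ℕ) :
    delannoyPoly R (m + 2) - delannoyPoly R m =
      2 * X * C (2 * ((m + 1 : ℕ) : R) + 1) * schroderPoly R (m + 1) := by
  rw [delannoyPoly_eq_sum_range (by omega : m ≤ m + 2), delannoyPoly, ← sum_sub_distrib,
    sum_range_succ', schroderPoly, mul_sum]
  simp only [Nat.choose_zero_right, sub_self, add_zero]
  refine sum_congr rfl fun j _ => ?_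
  have h := congrArg (Nat.cast : ℕ → R) (Nat.choose_mul_add_choose_add_two m j)
  push_cast at h ⊢
  rw [h]
  simp only [map_add, map_mul, map_natCast, map_ofNat, map_one]
  ring

end

theorem delannoy_diff (n : ℕ) (hn : 1 ≤ n) :
    (∑ k ∈ range (n + 1 + 1), C (((n + 1).choose k : ℚ) * ((n + 1 + k).choose k : ℚ)) * X ^ k) -
      (∑ k ∈ range (n - 1 + 1), C (((n - 1).choose k : ℚ) * ((n - 1 + k).choose k : ℚ)) * X ^ k) =
    2 * X * C ((2 * n + 1 : ℚ)) *
      ∑ k ∈ range (n + 1),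
        C (((n + k).choose (2 * k) : ℚ) * (catalan k : ℚ)) * X ^ k := by
  obtain ⟨m, rfl⟩ := Nat.exists_eq_add_of_le' hn
  exact delannoyPoly_add_two_sub m
end

section
/- For all positive integers m ≤ n, ∑_{k=m}^n C(k+m,2m)·(2m+1 − m(m+1)(2k+1)/(k(k+1))) = ((n−m)(n+m+1)/(n+1))·C(n+m,2m). -/
/-!
The sum telescopes. With `F m k = (k - m)(k + m + 1)/(k + 1) · C(k + m, 2m)` (`binomAntidiff`),
the `k`-th summand is `F m k - F m (k - 1)`; after clearing denominators this reduces to the ratio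
identity `C(k + m, 2m) · (k + m + 1) = C(k + m + 1, 2m) · (k + 1 - m)`. Both the summands and
`F m k` vanish for `k < m`, so the sum may be taken over `0, …, n` and collapses to `F m n`.
-/

open Finset

theorem Nat.cast_choose_mul_succ_eq {R : Type*} [CommRing R] (n k : ℕ) :
    (n.choose k : R) * (n + 1) = ((n + 1).choose k : R) * (n + 1 - k) := by
  rcases le_or_gt k (n + 1) with hk | hk
  · have := congrArg (Nat.cast (R := R)) (Nat.choose_mul_succ_eq n k)
    push_cast [Nat.cast_sub hk] at this
    exact this
  · rw [Nat.choose_eq_zero_of_lt hk, Nat.choose_eq_zero_of_lt (by omega)]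
    simp

def binomSummand (m k : ℕ) : ℚ :=
  ((k + m).choose (2 * m) : ℚ) *
    ((2 * m + 1 : ℚ) - (m : ℚ) * (m + 1) * (2 * k + 1) / ((k : ℚ) * (k + 1)))

def binomAntidiff (m k : ℕ) : ℚ :=
  ((k : ℚ) - m) * ((k : ℚ) + m + 1) / ((k : ℚ) + 1) * ((k + m).choose (2 * m) : ℚ)

theorem binomSummand_of_lt {m k : ℕ} (h : k < m) : binomSummand m k = 0 := by
  rw [binomSummand, Nat.choose_eq_zero_of_lt (by omega), Nat.cast_zero, zero_mul]

theorem binomAntidiff_of_lt {m k : ℕ} (h : k < m) : binomAntidiff m k = 0 := by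
  rw [binomAntidiff, Nat.choose_eq_zero_of_lt (by omega), Nat.cast_zero, mul_zero]

theorem binomSummand_succ (m k : ℕ) :
    binomSummand m (k + 1) = binomAntidiff m (k + 1) - binomAntidiff m k := by
  have key := Nat.cast_choose_mul_succ_eq (R := ℚ) (k + m) (2 * m)
  rw [show k + m + 1 = k + 1 + m by ring] at key
  unfold binomSummand binomAntidiff
  push_cast at key ⊢
  field_simp
  linear_combination ((k : ℚ) - m) * (k + 2) * key

theorem sum_range_binomSummand {m : ℕ} (hm : 0 < m) (n : ℕ) :
    ∑ k ∈ range (n + 1), binomSummand m k = binomAntidiff m n := by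
  rw [sum_range_succ', binomSummand_of_lt hm, add_zero]
  simp_rw [binomSummand_succ]
  rw [sum_range_sub (binomAntidiff m), binomAntidiff_of_lt hm, sub_zero]

theorem sum_Icc_binomSummand {m : ℕ} (hm : 0 < m) (n : ℕ) :
    ∑ k ∈ Icc m n, binomSummand m k = binomAntidiff m n := by
  rw [← sum_range_binomSummand hm n]
  refine sum_subset (fun k hk => ?_) fun k hkn hk => binomSummand_of_lt ?_
  · simp only [mem_Icc, mem_range] at hk ⊢; omega
  · simp only [mem_Icc, mem_range, not_and_or, not_le] at hkn hk; omega

theorem binom_sum_identity_general (m n : ℕ) (hm : 1 ≤ m) :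
    ∑ k ∈ Icc m n, ((k + m).choose (2 * m) : ℚ) *
        ((2 * m + 1 : ℚ) - (m : ℚ) * (m + 1) * (2 * k + 1) / ((k : ℚ) * (k + 1))) =
    ((n : ℚ) - m) * ((n : ℚ) + m + 1) / ((n : ℚ) + 1) * ((n + m).choose (2 * m) : ℚ) :=
  sum_Icc_binomSummand hm n

theorem binom_sum_identity (m n : ℕ) (hm : 1 ≤ m) (hmn : m ≤ n) :
    ∑ k ∈ Icc m n, ((k + m).choose (2 * m) : ℚ) *
        ((2 * m + 1 : ℚ) - (m : ℚ) * (m + 1) * (2 * k + 1) / ((k : ℚ) * (k + 1))) =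
    ((n : ℚ) - m) * ((n : ℚ) + m + 1) / ((n : ℚ) + 1) * ((n + m).choose (2 * m) : ℚ) :=
  binom_sum_identity_general m n hm
end

section
/- For all integers n ≥ k ≥ 1, the rational number w(n,k) := (1/k)·C(n−1,k−1)·C(n+k,k−1) is an integer. -/
theorem w_is_integer (n k : ℕ) (hk : 1 ≤ k) (hkn : k ≤ n) :
    (k : ℤ) ∣ ((n - 1).choose (k - 1) : ℤ) * ((n + k).choose (k - 1) : ℤ) := by
  obtain ⟨a, rfl⟩ : ∃ a, k = a + 1 := ⟨k - 1, (Nat.succ_pred_eq_of_pos hk).symm⟩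
  obtain ⟨b, rfl⟩ : ∃ b, n = b + 1 := ⟨n - 1, (Nat.succ_pred_eq_of_pos (le_trans hk hkn)).symm⟩
  simp only [Nat.add_sub_cancel]
  set A : ℤ := (Nat.choose b a : ℤ) with hA
  set B : ℤ := (Nat.choose (b + 1 + (a + 1)) a : ℤ) with hB
  have h1 : (b + 1) * Nat.choose b a = Nat.choose (b + 1) (a + 1) * (a + 1) :=
    Nat.add_one_mul_choose_eq b a
  have h2' : Nat.choose (b + 1 + (a + 1)) (a + 1) * (a + 1)
      = Nat.choose (b + 1 + (a + 1)) a * (b + 2) := by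
    rw [Nat.choose_succ_right_eq _ a]; congr 1; omega
  have d1 : ((a:ℤ) + 1) ∣ ((b:ℤ) + 1) * A := by
    refine ⟨(Nat.choose (b + 1) (a + 1) : ℤ), ?_⟩
    rw [hA]; exact_mod_cast h1.trans (Nat.mul_comm _ _)
  have d2 : ((a:ℤ) + 1) ∣ ((b:ℤ) + 2) * B := by
    refine ⟨(Nat.choose (b + 1 + (a + 1)) (a + 1) : ℤ), ?_⟩
    rw [hB]
    have : ((Nat.choose (b + 1 + (a + 1)) (a + 1) * (a + 1) : ℕ) : ℤ)
        = ((Nat.choose (b + 1 + (a + 1)) a * (b + 2) : ℕ) : ℤ) := by exact_mod_cast h2'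
    push_cast at this
    linarith [this]
  have hx : A * B = ((b:ℤ) + 2) * B * A - ((b:ℤ) + 1) * A * B := by ring
  rw [hx]
  exact dvd_sub (d2.mul_right A) (d1.mul_right B)
end

section
/- For every positive integer n, ∑_{k=1}^n C(n,k)·C(n+k,k−1)·C_{k−1}/(−4)^{k−1} = (⌊(n+1)/2⌋/4^{n−1})·C(n,⌊n/2⌋)². -/
/-!
Creative telescoping (Zeilberger's algorithm). Both sides satisfy the recurrence
`(n+1)(n+3) a(n+2) = (2n+3) a(n+1) + (n+1)² a(n)` and agree at `n = 0, 1`.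
For the sum `∑ⱼ t(n,j)` this follows by summing over `j` the certificate identity
`(n+1)(n+3) t(n+2,j) - (2n+3) t(n+1,j) - (n+1)² t(n,j) = G(n,j+1) - G(n,j)`,
which becomes an identity of rational functions once `t(n,j)`, `t(n+1,j)` and `t(n+2,j+1)`
are expressed through `t(n+2,j)` by the hypergeometric ratios of `t`.
For the right-hand side `r` it follows from
`r(2m+2) = r(2m+1)` and `4(m+1)(m+2) r(2m+3) = (2m+3)² r(2m+2)`.
-/

open Finset

theorem eq_of_three_term_recurrence {K : Type*} [Field K] {u v : ℕ → K} (a b c : ℕ → K)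
    (ha : ∀ n, a n ≠ 0) (hu : ∀ n, a n * u (n + 2) = b n * u (n + 1) + c n * u n)
    (hv : ∀ n, a n * v (n + 2) = b n * v (n + 1) + c n * v n)
    (h0 : u 0 = v 0) (h1 : u 1 = v 1) : u = v := by
  have key : ∀ n, u n = v n ∧ u (n + 1) = v (n + 1) := by
    intro n
    induction n with
    | zero => exact ⟨h0, h1⟩
    | succ n ih =>
      refine ⟨ih.2, mul_left_cancel₀ (ha n) ?_⟩
      rw [hu, hv, ih.1, ih.2]
  exact funext fun n => (key n).1

theorem catalan_succ_mul (j : ℕ) : catalan (j + 1) * (j + 2) = 2 * (2 * j + 1) * catalan j := by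
  refine Nat.eq_of_mul_eq_mul_left j.succ_pos ?_
  calc (j + 1) * (catalan (j + 1) * (j + 2)) = (j + 1) * (j + 1).centralBinom := by
        rw [← succ_mul_catalan_eq_centralBinom]; ring
    _ = 2 * (2 * j + 1) * j.centralBinom := Nat.succ_mul_centralBinom_succ j
    _ = (j + 1) * (2 * (2 * j + 1) * catalan j) := by
        rw [← succ_mul_catalan_eq_centralBinom]; ring

namespace CatalanBinomIdentity

/-- The summand with index `k = j + 1`. -/
noncomputable def term (n j : ℕ) : ℚ :=
  (n.choose (j + 1) : ℚ) * ((n + j + 1).choose j : ℚ) * (catalan j : ℚ) / (-4 : ℚ) ^ j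

noncomputable def lhs (n : ℕ) : ℚ := ∑ j ∈ range n, term n j

noncomputable def rhs (n : ℕ) : ℚ :=
  (((n + 1) / 2 : ℕ) : ℚ) / (4 : ℚ) ^ (n - 1) * ((n.choose (n / 2) : ℚ)) ^ 2

theorem term_eq_zero_of_le {n j : ℕ} (h : n ≤ j) : term n j = 0 := by
  simp [term, Nat.choose_eq_zero_of_lt (Nat.lt_succ_of_le h)]

theorem term_mul_eq_term_succ_mul (n j : ℕ) :
    term n j * ((n + 1) * (n + j + 2)) = term (n + 1) j * (n - j) * (n + 2) := by
  rcases le_or_gt n j with h | h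
  · rw [term_eq_zero_of_le h]
    obtain rfl | h := h.eq_or_lt
    · ring
    · rw [term_eq_zero_of_le (by omega : n + 1 ≤ j)]; ring
  have h₁ : (n.choose (j + 1) : ℚ) * (n + 1) = ((n + 1).choose (j + 1) : ℚ) * (n - j) := by
    have := Nat.choose_mul_succ_eq n (j + 1)
    rw [show n + 1 - (j + 1) = n - j by omega] at this
    have := congrArg (Nat.cast (R := ℚ)) this
    push_cast [Nat.cast_sub h.le] at this
    exact this
  have h₂ : ((n + j + 1).choose j : ℚ) * (n + j + 2) = ((n + 1 + j + 1).choose j : ℚ) * (n + 2) := by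
    have := Nat.choose_mul_succ_eq (n + j + 1) j
    rw [show n + j + 1 + 1 - j = n + 2 by omega, show n + j + 1 + 1 = n + 1 + j + 1 by omega] at this
    have := congrArg (Nat.cast (R := ℚ)) this
    push_cast at this
    linear_combination this
  simp only [term]
  linear_combination (catalan j / (-4 : ℚ) ^ j) *
    (((n + j + 1).choose j : ℚ) * (n + j + 2) * h₁ + ((n + 1).choose (j + 1) : ℚ) * (n - j) * h₂)

theorem term_succ_mul_eq_term_mul (n j : ℕ) :
    term n (j + 1) * (-4 * (j + 1) * (j + 2) ^ 2) =
      term n j * (n - 1 - j) * (n + j + 2) * (2 * (2 * j + 1)) := by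
  rcases le_or_gt n (j + 1) with h | h
  · rw [term_eq_zero_of_le h]
    obtain rfl | h := h.eq_or_lt
    · push_cast; ring
    · rw [term_eq_zero_of_le (by omega : n ≤ j)]; ring
  have h₁ : (n.choose (j + 2) : ℚ) * (j + 2) = (n.choose (j + 1) : ℚ) * (n - 1 - j) := by
    have := Nat.choose_succ_right_eq n (j + 1)
    rw [show (n : ℚ) - 1 - j = ((n - (j + 1) : ℕ) : ℚ) by push_cast [Nat.cast_sub h.le]; ring]
    exact_mod_cast this
  have h₂ : ((n + j + 2).choose (j + 1) : ℚ) * (j + 1) = ((n + j + 1).choose j : ℚ) * (n + j + 2) := by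
    have := Nat.add_one_mul_choose_eq (n + j + 1) j
    rw [show n + j + 1 + 1 = n + j + 2 by omega] at this
    have := congrArg (Nat.cast (R := ℚ)) this
    push_cast at this
    linear_combination -this
  have h₃ : (catalan (j + 1) : ℚ) * (j + 2) = 2 * (2 * j + 1) * catalan j := by
    exact_mod_cast catalan_succ_mul j
  simp only [term, show n + (j + 1) + 1 = n + j + 2 by omega, pow_succ]
  field_simp
  linear_combination
    ((n + j + 2).choose (j + 1) : ℚ) * (j + 1) * (catalan (j + 1) : ℚ) * (j + 2) * h₁
    + (n.choose (j + 1) : ℚ) * (n - 1 - j) * (catalan (j + 1) : ℚ) * (j + 2) * h₂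
    + (n.choose (j + 1) : ℚ) * (n - 1 - j) * ((n + j + 1).choose j : ℚ) * (n + j + 2) * h₃

noncomputable def certificate (n j : ℕ) : ℚ :=
  -2 * (2 * n + 3) * (n + 3) * (j + 1) ^ 2 * j / ((n + 2) * (n + j + 2) * (n + j + 3)) *
    term (n + 2) j

theorem recurrence_eq_certificate_sub (n j : ℕ) :
    (n + 1) * (n + 3) * term (n + 2) j - (2 * n + 3) * term (n + 1) j - (n + 1) ^ 2 * term n j =
      certificate n (j + 1) - certificate n j := by
  have h₁ : term (n + 1) j = term (n + 2) j * (n + 1 - j) * (n + 3) / ((n + 2) * (n + j + 3)) := by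
    rw [eq_div_iff (by positivity)]
    have := term_mul_eq_term_succ_mul (n + 1) j
    push_cast at this
    linear_combination this
  have h₀ : term n j = term (n + 1) j * (n - j) * (n + 2) / ((n + 1) * (n + j + 2)) := by
    rw [eq_div_iff (by positivity)]
    exact term_mul_eq_term_succ_mul n j
  have h₂ : term (n + 2) (j + 1) =
      term (n + 2) j * (n + 1 - j) * (n + j + 4) * (2 * (2 * j + 1)) / (-4 * (j + 1) * (j + 2) ^ 2) := by
    rw [eq_div_iff (by positivity)]
    have := term_succ_mul_eq_term_mul (n + 2) j
    push_cast at this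
    linear_combination this
  simp only [certificate, h₂, h₀, h₁]
  push_cast
  field_simp
  ring

theorem sum_range_term_of_le {n N : ℕ} (h : n ≤ N) : ∑ j ∈ range N, term n j = lhs n :=
  (sum_subset (range_mono h) fun j _ hj => term_eq_zero_of_le (by simpa using hj)).symm

theorem lhs_recurrence (n : ℕ) :
    (n + 1) * (n + 3) * lhs (n + 2) = (2 * n + 3) * lhs (n + 1) + (n + 1) ^ 2 * lhs n := by
  have telescope := sum_range_sub (certificate n) (n + 2)
  have hlast : certificate n (n + 2) = 0 := by simp [certificate, term_eq_zero_of_le le_rfl]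
  have hfirst : certificate n 0 = 0 := by simp [certificate]
  simp only [← recurrence_eq_certificate_sub, sum_sub_distrib, ← mul_sum, hlast, hfirst,
    sum_range_term_of_le le_rfl, sum_range_term_of_le (Nat.le_succ (n + 1)),
    sum_range_term_of_le (by omega : n ≤ n + 2)] at telescope
  linear_combination telescope

theorem rhs_two_mul_add_two (m : ℕ) : rhs (2 * m + 2) = rhs (2 * m + 1) := by
  have h : ((2 * m + 2).choose (m + 1) : ℚ) = 2 * (2 * m + 1).choose m := by
    rw [Nat.choose_succ_succ', Nat.choose_symm_half]; push_cast; ring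
  simp only [rhs, show (2 * m + 2 + 1) / 2 = m + 1 by omega, show (2 * m + 2) / 2 = m + 1 by omega,
    show (2 * m + 1) / 2 = m by omega, show 2 * m + 2 - 1 = 2 * m + 1 by omega, show 2 * m + 1 - 1 = 2 * m by omega, h, pow_succ]
  field_simp
  ring

theorem rhs_two_mul_add_three (m : ℕ) :
    4 * (m + 1) * (m + 2) * rhs (2 * m + 3) = (2 * m + 3) ^ 2 * rhs (2 * m + 2) := by
  have h : ((2 * m + 3).choose (m + 1) : ℚ) = (2 * m + 2).choose (m + 1) * (2 * m + 3) / (m + 2) := by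
    rw [eq_div_iff (by positivity)]
    have := Nat.choose_mul_succ_eq (2 * m + 2) (m + 1)
    rw [show 2 * m + 2 + 1 - (m + 1) = m + 2 by omega] at this
    have := congrArg (Nat.cast (R := ℚ)) this
    push_cast at this
    linear_combination -this
  simp only [rhs, show (2 * m + 3 + 1) / 2 = m + 2 by omega, show (2 * m + 3) / 2 = m + 1 by omega,
    show (2 * m + 2) / 2 = m + 1 by omega, show 2 * m + 3 - 1 = 2 * m + 1 + 1 by omega,
    show 2 * m + 2 - 1 = 2 * m + 1 by omega, pow_succ, h]
  push_cast
  field_simp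

theorem rhs_recurrence (n : ℕ) :
    (n + 1) * (n + 3) * rhs (n + 2) = (2 * n + 3) * rhs (n + 1) + (n + 1) ^ 2 * rhs n := by
  obtain ⟨m, rfl | rfl⟩ := Nat.even_or_odd' n
  · rcases m with _ | m
    · norm_num [rhs]
    · have hA := rhs_two_mul_add_two (m + 1)
      rw [show 2 * (m + 1) + 1 = 2 * m + 3 by ring, show 2 * (m + 1) = 2 * m + 2 by ring] at hA ⊢
      push_cast
      linear_combination (2 * m + 3) * (2 * m + 5 : ℚ) * hA + rhs_two_mul_add_three m
  · rw [show 2 * m + 1 + 2 = 2 * m + 3 by ring, show 2 * m + 1 + 1 = 2 * m + 2 by ring]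
    push_cast
    linear_combination rhs_two_mul_add_three m + (2 * m + 2 : ℚ) ^ 2 * rhs_two_mul_add_two m

theorem lhs_eq_rhs : lhs = rhs :=
  eq_of_three_term_recurrence (fun n => (n + 1) * (n + 3 : ℚ)) (fun n => 2 * n + 3)
    (fun n => (n + 1) ^ 2) (fun n => by positivity) lhs_recurrence rhs_recurrence
    (by simp [lhs, rhs]) (by norm_num [lhs, rhs, term])

end CatalanBinomIdentity

theorem catalan_binom_identity_general (n : ℕ) :
    ∑ k ∈ Icc 1 n, (n.choose k : ℚ) * ((n + k).choose (k - 1) : ℚ) *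
        (catalan (k - 1) : ℚ) / (-4 : ℚ) ^ (k - 1) =
    (((n + 1) / 2 : ℕ) : ℚ) / (4 : ℚ) ^ (n - 1) * ((n.choose (n / 2) : ℚ))^2 := by
  have reindex : ∑ k ∈ Icc 1 n, (n.choose k : ℚ) * ((n + k).choose (k - 1) : ℚ) *
      (catalan (k - 1) : ℚ) / (-4 : ℚ) ^ (k - 1) = CatalanBinomIdentity.lhs n := by
    rw [← Ico_add_one_right_eq_Icc, sum_Ico_eq_sum_range, Nat.add_sub_cancel]
    refine sum_congr rfl fun j _ => ?_
    rw [CatalanBinomIdentity.term, Nat.add_sub_cancel_left, add_comm 1 j, ← add_assoc]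
  rw [reindex, CatalanBinomIdentity.lhs_eq_rhs]
  rfl

theorem catalan_binom_identity (n : ℕ) (hn : 1 ≤ n) :
    ∑ k ∈ Icc 1 n, (n.choose k : ℚ) * ((n + k).choose (k - 1) : ℚ) *
        (catalan (k - 1) : ℚ) / (-4 : ℚ) ^ (k - 1) =
    (((n + 1) / 2 : ℕ) : ℚ) / (4 : ℚ) ^ (n - 1) * ((n.choose (n / 2) : ℚ))^2 :=
  catalan_binom_identity_general n
end

section
/- For every natural number m, ∑_{j=0}^m C(2j,j)²/((j+1)·16^j) = ((2m+1)²/((m+1)·16^m))·C(2m,m)². -/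
/-! The closed form is checked by induction on `m`: after substituting
`(n + 1) C(2n+2, n+1) = 2 (2n + 1) C(2n, n)`, the inductive step is an identity of rational
functions in `n` times `C(2n, n)² / 16ⁿ`. -/

open Finset

theorem Nat.cast_centralBinom_succ (n : ℕ) :
    ((n + 1).centralBinom : ℚ) = 2 * (2 * n + 1) * n.centralBinom / (n + 1) := by
  rw [eq_div_iff (by positivity), mul_comm]
  exact_mod_cast Nat.succ_mul_centralBinom_succ n

theorem sum_range_centralBinom_sq_div (m : ℕ) :
    ∑ j ∈ range (m + 1), (j.centralBinom : ℚ) ^ 2 / ((j + 1) * 16 ^ j) =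
      (2 * m + 1) ^ 2 / ((m + 1) * 16 ^ m) * (m.centralBinom : ℚ) ^ 2 := by
  induction m with
  | zero => norm_num
  | succ n ih =>
    rw [sum_range_succ, ih, Nat.cast_centralBinom_succ]
    push_cast
    field_simp
    ring

theorem central_binom_sum (m : ℕ) :
    ∑ j ∈ range (m + 1), (((2 * j).choose j : ℚ))^2 / (((j : ℚ) + 1) * 16 ^ j) =
    ((2 * (m : ℚ) + 1))^2 / (((m : ℚ) + 1) * 16 ^ m) * (((2 * m).choose m : ℚ))^2 := by
  simpa only [Nat.centralBinom_eq_two_mul_choose] using sum_range_centralBinom_sq_div m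
end

section
/- For every odd prime p, C(2p−1, p−1) ≡ 1 (mod p²). -/
open Finset

namespace Nat

theorem centralBinom_succ_eq_two_mul_choose (n : ℕ) :
    centralBinom (n + 1) = 2 * (2 * n + 1).choose n := by
  rw [centralBinom_eq_two_mul_choose, show 2 * (n + 1) = 2 * n + 1 + 1 by ring,
    choose_succ_succ', choose_symm_half, ← two_mul]

/-- In `C(2p, p) = ∑ C(p, i)²` every term other than `i = 0` and `i = p` is divisible by `p²`. -/
theorem Prime.centralBinom_modEq_two {p : ℕ} (hp : p.Prime) : centralBinom p ≡ 2 [MOD p ^ 2] := by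
  obtain ⟨q, rfl⟩ : ∃ q, p = q + 1 := exists_eq_add_one.mpr hp.pos
  have hinterior : (q + 1) ^ 2 ∣ ∑ i ∈ range q, (q + 1).choose (i + 1) ^ 2 :=
    dvd_sum fun i hi => pow_dvd_pow_of_dvd
      (hp.dvd_choose_self (succ_ne_zero i) (by simpa using hi)) 2
  rw [centralBinom_eq_two_mul_choose, ← sum_range_choose_sq, sum_range_succ, sum_range_succ',
    choose_zero_right, choose_self]
  simpa [add_assoc] using (modEq_zero_iff_dvd.mpr hinterior).add_right 2

end Nat

theorem wolstenholme_weak (p : ℕ) (hp : p.Prime) (hp2 : p ≠ 2) :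
    (((2 * p - 1).choose (p - 1) : ℤ)) ≡ 1 [ZMOD (p : ℤ)^2] := by
  obtain ⟨q, rfl⟩ : ∃ q, p = q + 1 := Nat.exists_eq_add_one.mpr hp.pos
  have hcentral : 2 * (2 * q + 1).choose q ≡ 2 * 1 [MOD (q + 1) ^ 2] := by
    rw [← Nat.centralBinom_succ_eq_two_mul_choose]
    exact hp.centralBinom_modEq_two
  have hcoprime : Nat.gcd ((q + 1) ^ 2) 2 = 1 :=
    Nat.Coprime.pow_left 2 ((Nat.coprime_primes hp Nat.prime_two).mpr hp2)
  rw [show 2 * (q + 1) - 1 = 2 * q + 1 by omega, Nat.add_sub_cancel]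
  exact_mod_cast Int.natCast_modEq_iff.mpr (hcentral.cancel_left_of_coprime hcoprime)
end

section
/- For every odd prime p, the Catalan number C_{p−1} = C(2p−2,p−1)/p satisfies C_{p−1} ≡ −(2p+1) (mod p²). -/
/-!
Since `C(2p, p) = 2 (2p - 1) C_{p-1}` and `C(2p, p) ≡ 2 (mod p²)`, the claim follows from
`2 (2p - 1) (2p + 1) = 8p² - 2` after cancelling `2 (2p - 1)`, which is a unit mod `p²`
for odd `p`.
-/

open Finset

/-- In Vandermonde's `∑ (p choose i)² = C(2p, p)` every term except the two outer ones is
divisible by `p²`. -/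
theorem Nat.Prime.centralBinom_modEq_two_s10 {p : ℕ} (hp : p.Prime) :
    p.centralBinom ≡ 2 [MOD p ^ 2] := by
  obtain ⟨q, rfl⟩ := Nat.exists_eq_succ_of_ne_zero hp.ne_zero
  have hinner : (q + 1) ^ 2 ∣ ∑ i ∈ range q, (q.succ.choose (i + 1)) ^ 2 :=
    dvd_sum fun i hi ↦ pow_dvd_pow_of_dvd
      (hp.dvd_choose_self i.succ_ne_zero (by simpa using mem_range.mp hi)) 2
  rw [Nat.centralBinom_eq_two_mul_choose, ← Nat.sum_range_choose_sq, sum_range_succ,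
    sum_range_succ', Nat.choose_self, Nat.choose_zero_right]
  exact ((Nat.modEq_zero_iff_dvd.mpr hinner).add_right _).add_right _

theorem Nat.centralBinom_succ_eq_mul_catalan_s10 (n : ℕ) :
    (n + 1).centralBinom = 2 * (2 * n + 1) * catalan n :=
  Nat.eq_of_mul_eq_mul_left (Nat.succ_pos n) <| by
    rw [Nat.succ_mul_centralBinom_succ, ← succ_mul_catalan_eq_centralBinom,
      Nat.succ_eq_add_one]
    ring

theorem catalan_pred_prime (p : ℕ) (hp : p.Prime) (hp2 : p ≠ 2) :
    (catalan (p - 1) : ℤ) ≡ -(2 * (p : ℤ) + 1) [ZMOD (p : ℤ)^2] := by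
  have hcat : (p.centralBinom : ℤ) = 2 * (2 * p - 1) * catalan (p - 1) := by
    obtain ⟨n, rfl⟩ := Nat.exists_eq_succ_of_ne_zero hp.ne_zero
    rw [Nat.succ_sub_one, Nat.succ_eq_add_one, Nat.centralBinom_succ_eq_mul_catalan_s10]
    push_cast
    ring
  have hcb : (p.centralBinom : ℤ) ≡ 2 [ZMOD (p : ℤ) ^ 2] := by
    exact_mod_cast Int.natCast_modEq_iff.mpr hp.centralBinom_modEq_two_s10
  have hcop : IsCoprime ((p : ℤ) ^ 2) (2 * (2 * p - 1)) := by
    have hodd : IsCoprime (p : ℤ) 2 :=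
      Nat.isCoprime_iff_coprime.mpr ((Nat.coprime_primes hp Nat.prime_two).mpr hp2)
    exact (hodd.mul_right ⟨2, -1, by ring⟩).pow_left
  have hdvd : (p : ℤ) ^ 2 ∣ (-(2 * p + 1) - catalan (p - 1)) * (2 * (2 * p - 1)) := by
    have hsplit : (-(2 * p + 1) - catalan (p - 1)) * (2 * (2 * (p : ℤ) - 1)) =
        (2 - p.centralBinom) - 8 * p ^ 2 := by
      rw [hcat]; ring
    rw [hsplit]
    exact hcb.dvd.sub (dvd_mul_left _ _)
  exact Int.modEq_iff_dvd.mpr (hcop.dvd_of_dvd_mul_right hdvd)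
end

section
/- For every odd prime p and every k with 1 ≤ k ≤ p−1, the integer w(p,k) = (1/k)C(p−1,k−1)C(p+k,k−1) satisfies k·w(p,k) ≡ (−1)^{k−1}(k(1−p) + p) (mod p²). -/
theorem w_p_k_congr (p k : ℕ) (hp : p.Prime) (hp2 : p ≠ 2)
    (hk : 1 ≤ k) (hkp : k ≤ p - 1) :
    (((p - 1).choose (k - 1) : ℤ)) * (((p + k).choose (k - 1) : ℤ)) ≡
      (-1) ^ (k - 1) * ((k : ℤ) * (1 - (p : ℤ)) + (p : ℤ)) [ZMOD (p : ℤ)^2] := by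
  have hp1 : 2 ≤ p := hp.two_le
  induction k, hk using Nat.le_induction with
  | base =>
    simp
  | succ k hk ih =>
    have hkp' : k ≤ p - 1 := by omega
    have hklt : k < p := by omega
    have ih' := ih hkp'
    -- key natural-number identities
    have h1 : (p - 1).choose k * k = (p - 1).choose (k - 1) * (p - k) := by
      have h := Nat.choose_succ_right_eq (p - 1) (k - 1)
      have e1 : k - 1 + 1 = k := by omega
      have e2 : p - 1 - (k - 1) = p - k := by omega
      rw [e1, e2] at h
      exact h
    have h2 : (p + k + 1) * (p + k).choose (k - 1) = (p + k + 1).choose k * k := by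
      have h := Nat.add_one_mul_choose_eq (p + k) (k - 1)
      have e1 : k - 1 + 1 = k := by omega
      simpa [Nat.succ_eq_add_one, e1] using h
    have h3 : (k * k) * ((p - 1).choose k * (p + k + 1).choose k) =
        ((p - k) * (p + k + 1)) * ((p - 1).choose (k - 1) * (p + k).choose (k - 1)) := by
      calc (k * k) * ((p - 1).choose k * (p + k + 1).choose k)
          = ((p - 1).choose k * k) * ((p + k + 1).choose k * k) := by ring
        _ = ((p - 1).choose (k - 1) * (p - k)) * ((p + k + 1) * (p + k).choose (k - 1)) := by
            rw [h1, ← h2]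
        _ = ((p - k) * (p + k + 1)) * ((p - 1).choose (k - 1) * (p + k).choose (k - 1)) := by
            ring
    have hkle : k ≤ p := le_of_lt hklt
    have key : (k : ℤ) ^ 2 * (((p - 1).choose k : ℤ) * ((p + k + 1).choose k : ℤ)) =
        (((p : ℤ) - k) * ((p : ℤ) + k + 1)) *
          (((p - 1).choose (k - 1) : ℤ) * ((p + k).choose (k - 1) : ℤ)) := by
      have := congrArg (Nat.cast : ℕ → ℤ) h3
      push_cast [Nat.cast_sub hkle] at this
      linear_combination this
    -- multiply IH by (p-k)(p+k+1)
    have step1 : (k : ℤ) ^ 2 * (((p - 1).choose k : ℤ) * ((p + k + 1).choose k : ℤ)) ≡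
        (((p : ℤ) - k) * ((p : ℤ) + k + 1)) *
          ((-1) ^ (k - 1) * ((k : ℤ) * (1 - (p : ℤ)) + (p : ℤ))) [ZMOD (p : ℤ) ^ 2] := by
      rw [key]
      exact ih'.mul_left _
    have step2 : (((p : ℤ) - k) * ((p : ℤ) + k + 1)) *
          ((-1) ^ (k - 1) * ((k : ℤ) * (1 - (p : ℤ)) + (p : ℤ))) ≡
        (k : ℤ) ^ 2 * ((-1) ^ k * (((k : ℤ) + 1) * (1 - (p : ℤ)) + (p : ℤ)))
          [ZMOD (p : ℤ) ^ 2] := by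
      have e1 : (-1 : ℤ) ^ k = (-1) ^ (k - 1) * (-1) := by
        conv_lhs => rw [show k = (k - 1) + 1 from by omega]
        rw [pow_succ]
      refine (Int.modEq_iff_dvd.mpr ⟨(-1) ^ (k - 1) * ((p : ℤ) * k - p - 1), ?_⟩)
      rw [e1]; ring
    have hc0 : Nat.Coprime k p := by
      refine Nat.Coprime.symm ((hp.coprime_iff_not_dvd).mpr (fun h => ?_))
      have := Nat.le_of_dvd (by omega) h
      omega
    have hco : Int.gcd ((p : ℤ) ^ 2) ((k : ℤ) ^ 2) = 1 := by
      rw [show ((k : ℤ) ^ 2) = ((k ^ 2 : ℕ) : ℤ) by push_cast; ring,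
        show ((p : ℤ) ^ 2) = ((p ^ 2 : ℕ) : ℤ) by push_cast; ring,
        Int.gcd_natCast_natCast]
      exact Nat.Coprime.pow _ _ hc0.symm
    have final := Int.ModEq.cancel_left_div_gcd
      (show (0:ℤ) < (p:ℤ)^2 by positivity) (step1.trans step2)
    rw [hco] at final
    simp only [Nat.cast_one, Int.ediv_one] at final
    have e2 : p + (k + 1) = p + k + 1 := by omega
    have e3 : k + 1 - 1 = k := by omega
    rw [e2, e3]
    push_cast
    push_cast at final
    convert final using 2 <;> ring
end

section
/- For every odd prime p, w(p,p) = (1/p)·C(2p, p−1) ≡ 2(1−p) (mod p²). -/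
/-!
By Vandermonde, `C(2p, p) = ∑ C(p, i)²`, and every term with `0 < i < p` is divisible by `p²`,
so `C(2p, p) ≡ 2 (mod p²)`. Since `C(2p, p) = (p + 1)/p · C(2p, p - 1) = (1 + p) w` and
`1 - p` inverts `1 + p` modulo `p²`, we get `w ≡ (1 - p) C(2p, p) ≡ 2(1 - p)`.
-/

open Finset

theorem Nat.Prime.choose_two_mul_self_modEq_two {p : ℕ} (hp : p.Prime) :
    (2 * p).choose p ≡ 2 [MOD p ^ 2] := by
  obtain ⟨q, rfl⟩ : ∃ q, p = q + 1 := Nat.exists_eq_succ_of_ne_zero hp.ne_zero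
  have hmiddle : (q + 1) ^ 2 ∣ ∑ i ∈ range q, (q + 1).choose (i + 1) ^ 2 := by
    refine dvd_sum fun i hi => pow_dvd_pow_of_dvd (hp.dvd_choose_self ?_ ?_) 2
    · omega
    · simp only [mem_range] at hi; omega
  rw [← Nat.sum_range_choose_sq, sum_range_succ, sum_range_succ']
  simp only [Nat.choose_self, Nat.choose_zero_right, one_pow, add_assoc]
  exact (Nat.modEq_zero_iff_dvd.mpr hmiddle).add_right 2

theorem Nat.choose_two_mul_self_mul_self {n : ℕ} (hn : 0 < n) :
    (2 * n).choose n * n = (2 * n).choose (n - 1) * (n + 1) := by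
  have h := Nat.choose_succ_right_eq (2 * n) (n - 1)
  rwa [Nat.sub_add_cancel hn, show 2 * n - (n - 1) = n + 1 by omega] at h

theorem w_p_p_congr_general (p : ℕ) (hp : p.Prime) (w : ℤ)
    (hw : (p : ℤ) * w = ((2 * p).choose (p - 1) : ℤ)) :
    w ≡ 2 * (1 - (p : ℤ)) [ZMOD (p : ℤ)^2] := by
  have hcentral : ((2 * p).choose p : ℤ) ≡ 2 [ZMOD (p : ℤ) ^ 2] := by
    exact_mod_cast Int.natCast_modEq_iff.mpr hp.choose_two_mul_self_modEq_two
  have hkey : ((2 * p).choose p : ℤ) = (1 + p) * w := by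
    have h : ((2 * p).choose p * p : ℤ) = (2 * p).choose (p - 1) * (p + 1) := by
      exact_mod_cast Nat.choose_two_mul_self_mul_self hp.pos
    refine mul_right_cancel₀ (Int.natCast_ne_zero.mpr hp.ne_zero) ?_
    rw [h, ← hw]
    ring
  calc w ≡ (1 - (p : ℤ) ^ 2) * w [ZMOD (p : ℤ) ^ 2] := Int.modEq_iff_dvd.mpr ⟨-w, by ring⟩
    _ = (1 - p) * (2 * p).choose p := by rw [hkey]; ring
    _ ≡ (1 - p) * 2 [ZMOD (p : ℤ) ^ 2] := hcentral.mul_left _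
    _ = 2 * (1 - p) := mul_comm _ _

theorem w_p_p_congr (p : ℕ) (hp : p.Prime) (hp2 : p ≠ 2) (w : ℤ)
    (hw : (p : ℤ) * w = ((2 * p).choose (p - 1) : ℤ)) :
    w ≡ 2 * (1 - (p : ℤ)) [ZMOD (p : ℤ)^2] :=
  w_p_p_congr_general p hp w hw
end

section
/- For every natural number n, ∑_{k=0}^{⌊n/2⌋} C(n,2k)·C(2k,k)·(2x+1)^{n−2k}·(x(x+1))^k = D_n(x) as polynomials in x, where D_n(x) = ∑_{k=0}^n C(n,k)² x^k (x+1)^{n−k}. -/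
/-!
With `a = x` and `b = x + 1` (so `a + b = 2x + 1`), this is an identity in any commutative
semiring. Expanding `(a + b)^(n-2j) (ab)^j` binomially, the coefficient of `a^k b^(n-k)` on the
trinomial side is `Σ_j n! / (j!² (k-j)! (n-k-j)!) = Σ_j C(n,k) C(k,j) C(n-k,j)`, and Vandermonde's
identity sums this to `C(n,k)²`.
-/

open Finset Polynomial

theorem Nat.choose_mul_choose_sub_comm (N i j : ℕ) :
    N.choose j * (N - j).choose i = N.choose i * (N - i).choose j := by
  have hj := Nat.choose_mul (n := N) (Nat.le_add_left j i)
  have hi := Nat.choose_mul (n := N) (Nat.le_add_right i j)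
  rw [Nat.add_sub_cancel] at hj
  rw [Nat.add_sub_cancel_left] at hi
  rw [← hj, ← hi, Nat.choose_symm_add]

theorem Nat.choose_two_mul_mul_choose_mul_choose (n i j : ℕ) :
    n.choose (2 * j) * (2 * j).choose j * (n - 2 * j).choose i =
      n.choose (i + j) * (i + j).choose j * (n - (i + j)).choose j := by
  rw [Nat.choose_mul (by omega), Nat.choose_mul (Nat.le_add_left j i), two_mul,
    Nat.add_sub_cancel, Nat.add_sub_cancel, mul_assoc, mul_assoc, ← Nat.sub_sub,
    Nat.choose_mul_choose_sub_comm, add_comm i j, ← Nat.sub_sub]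

theorem Nat.sum_range_choose_mul_choose (m p : ℕ) {N : ℕ} (hN : min m p < N) :
    ∑ j ∈ range N, m.choose j * p.choose j = (m + p).choose m := by
  have hvanish : ∀ j, min m p < j → m.choose j * p.choose j = 0 := by
    intro j hj
    rcases min_lt_iff.1 hj with h | h <;> simp [Nat.choose_eq_zero_of_lt h]
  rw [Nat.choose_symm_add, Nat.add_choose_eq, Nat.sum_antidiagonal_eq_sum_range_succ_mk]
  calc ∑ j ∈ range N, m.choose j * p.choose j
      = ∑ j ∈ range (min m p + 1), m.choose j * p.choose j := by
        refine (sum_subset (range_subset_range.2 hN) fun j _ hj => hvanish j ?_).symm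
        rw [mem_range] at hj; omega
    _ = ∑ j ∈ range (p + 1), m.choose j * p.choose j := by
        refine sum_subset (range_subset_range.2 (by omega)) fun j _ hj => hvanish j ?_
        rw [mem_range] at hj; omega
    _ = _ := by
        refine sum_congr rfl fun j hj => ?_
        rw [Nat.choose_symm (mem_range_succ_iff.1 hj)]

section CommSemiring

variable {R : Type*} [CommSemiring R]

theorem sum_choose_mul_choose_mul_choose_mul_pow (a b : R) {n j : ℕ} (hj : 2 * j ≤ n) :
    ∑ k ∈ range (n + 1), ((n.choose k * k.choose j * (n - k).choose j : ℕ) : R) *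
        a ^ k * b ^ (n - k) =
      ((n.choose (2 * j) * (2 * j).choose j : ℕ) : R) * (a + b) ^ (n - 2 * j) * (a * b) ^ j := by
  set T : ℕ → R := fun k ↦
    ((n.choose k * k.choose j * (n - k).choose j : ℕ) : R) * a ^ k * b ^ (n - k) with hT
  calc ∑ k ∈ range (n + 1), T k
      = ∑ k ∈ Ico j (n - j + 1), T k := by
        refine (sum_subset (fun k hk => ?_) fun k hkn hk => ?_).symm
        · simp only [mem_Ico, mem_range] at hk ⊢; omega
        · rw [mem_range] at hkn
          simp only [mem_Ico, not_and_or, not_le, not_lt] at hk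
          rcases hk with hk | hk
          · simp [hT, Nat.choose_eq_zero_of_lt hk]
          · simp [hT, Nat.choose_eq_zero_of_lt (show n - k < j by omega)]
    _ = ∑ i ∈ range (n - 2 * j + 1), T (j + i) := by
        rw [sum_Ico_eq_sum_range, show n - j + 1 - j = n - 2 * j + 1 by omega]
    _ = _ := by
        rw [add_pow, mul_sum, sum_mul]
        refine sum_congr rfl fun i hi => ?_
        have hi : i ≤ n - 2 * j := mem_range_succ_iff.1 hi
        simp only [hT]
        rw [add_comm j i, ← Nat.choose_two_mul_mul_choose_mul_choose,
          show n - (i + j) = n - 2 * j - i + j by omega]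
        push_cast
        ring

theorem sum_choose_sq_mul_pow_mul_pow (a b : R) (n : ℕ) :
    ∑ k ∈ range (n + 1), ((n.choose k ^ 2 : ℕ) : R) * a ^ k * b ^ (n - k) =
      ∑ j ∈ range (n / 2 + 1),
        ((n.choose (2 * j) * (2 * j).choose j : ℕ) : R) * (a + b) ^ (n - 2 * j) * (a * b) ^ j := by
  have vandermonde : ∀ k ∈ range (n + 1),
      n.choose k ^ 2 = ∑ j ∈ range (n / 2 + 1), n.choose k * k.choose j * (n - k).choose j := by
    intro k hk
    have hk : k ≤ n := mem_range_succ_iff.1 hk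
    simp_rw [mul_assoc, ← mul_sum]
    rw [Nat.sum_range_choose_mul_choose k (n - k) (by omega), Nat.add_sub_cancel' hk, sq]
  calc _ = ∑ k ∈ range (n + 1), ∑ j ∈ range (n / 2 + 1),
        ((n.choose k * k.choose j * (n - k).choose j : ℕ) : R) * a ^ k * b ^ (n - k) := by
        refine sum_congr rfl fun k hk => ?_
        rw [vandermonde k hk, Nat.cast_sum, sum_mul, sum_mul]
    _ = _ := by
        rw [sum_comm]
        exact sum_congr rfl fun j hj =>
          sum_choose_mul_choose_mul_choose_mul_pow a b (by rw [mem_range] at hj; omega)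

end CommSemiring

theorem delannoy_trinomial_form (n : ℕ) :
    (∑ k ∈ range (n / 2 + 1),
        C ((n.choose (2 * k) : ℤ) * ((2 * k).choose k : ℤ)) *
          (2 * X + 1) ^ (n - 2 * k) * (X * (X + 1)) ^ k) =
    ∑ k ∈ range (n + 1), C ((n.choose k : ℤ))^2 * X ^ k * (X + 1) ^ (n - k) := by
  rw [show (2 * X + 1 : ℤ[X]) = X + (X + 1) by ring]
  simpa using (sum_choose_sq_mul_pow_mul_pow (X : ℤ[X]) (X + 1) n).symm
end

section
/- For every natural number n, ∑_{k=0}^{⌊n/2⌋} C(n,2k)·C_k·(2x+1)^{n−2k}·(x(x+1))^k = s_{n+1}(x) as polynomials in x, where C_k is the Catalan number and s_m(x) = ∑_{j=1}^m (1/m)C(m,j)C(m,j−1) x^{j−1}(x+1)^{m−j}. -/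
open Finset Polynomial

/-!
After multiplying by `n + 1`, both sides are the coefficient of `t ^ n` in
`((1 + x t) (1 + (x + 1) t)) ^ (n + 1)`. Expanding the two binomial powers separately gives the
Narayana form on the right; writing `(1 + x t) (1 + (x + 1) t) = (1 + (2x + 1) t) + x (x + 1) t²`
and expanding binomially in the second summand gives the sum on the left, since
`(n + 1) C(n, 2k) C_k = C(n + 1, k) C(n + 1 - k, n - 2k)`.
-/

namespace Polynomial

theorem coeff_one_add_C_mul_X_pow {R : Type*} [CommSemiring R] (c : R) (m a : ℕ) :
    ((1 + C c * X) ^ m).coeff a = m.choose a * c ^ a := by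
  have hterm : ∀ i, (C c * X) ^ i * 1 ^ (m - i) * (m.choose i : R[X]) =
      C (c ^ i * m.choose i) * X ^ i := fun i => by
    simp only [map_mul, map_pow, map_natCast]; ring
  simp only [add_comm (1 : R[X]), add_pow, hterm, finsetSum_coeff, coeff_C_mul_X_pow]
  rw [sum_ite_eq]
  split_ifs with h
  · ring
  · rw [Nat.choose_eq_zero_of_lt (by simpa using h)]; simp

theorem coeff_one_add_C_mul_X_add_C_mul_X_sq_pow {R : Type*} [CommSemiring R] (s p : R)
    (m n : ℕ) :
    ((1 + C s * X + C p * X ^ 2) ^ m).coeff n =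
      ∑ j ∈ range (n / 2 + 1),
        m.choose j * (m - j).choose (n - 2 * j) * s ^ (n - 2 * j) * p ^ j := by
  set f : ℕ → R := fun j => m.choose j * (m - j).choose (n - 2 * j) * s ^ (n - 2 * j) * p ^ j
  have hterm : ∀ j, (C p * X ^ 2) ^ j * (1 + C s * X) ^ (m - j) * (m.choose j : R[X]) =
      X ^ (2 * j) * (C (p ^ j * m.choose j) * (1 + C s * X) ^ (m - j)) := fun j => by
    simp only [map_mul, map_pow, map_natCast]; ring
  have hcoeff : ∀ j,
      (X ^ (2 * j) * (C (p ^ j * m.choose j) * (1 + C s * X) ^ (m - j))).coeff n =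
        if 2 * j ≤ n then f j else 0 := fun j => by
    rw [coeff_X_pow_mul', coeff_C_mul, coeff_one_add_C_mul_X_pow]
    split_ifs <;> simp only [f]; ring
  -- The binomial sum runs over `j ≤ m`, the claimed one over `2 j ≤ n`; both reduce to `j ≤ min`.
  have hle_m : range (min m (n / 2) + 1) ⊆ range (m + 1) := range_subset_range.mpr (by omega)
  have hle_n : range (min m (n / 2) + 1) ⊆ range (n / 2 + 1) := range_subset_range.mpr (by omega)
  rw [add_comm _ (C p * X ^ 2), add_pow]
  simp only [hterm, finsetSum_coeff, hcoeff]
  rw [← sum_subset hle_m, ← sum_subset hle_n (f := f)]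
  · exact sum_congr rfl fun j hj => if_pos (by simp only [mem_range] at hj; omega)
  · intro j hj hj'
    simp only [mem_range] at hj hj'
    simp [f, Nat.choose_eq_zero_of_lt (show m < j by omega)]
  · intro j hj hj'
    simp only [mem_range] at hj hj'
    rw [if_neg (by omega)]

end Polynomial

theorem sum_choose_mul_choose_mul_pow_eq_sum_add_pow {R : Type*} [CommSemiring R] (u v : R)
    (m n : ℕ) :
    ∑ a ∈ range (n + 1), m.choose a * m.choose (n - a) * u ^ a * v ^ (n - a) =
      ∑ k ∈ range (n / 2 + 1),
        m.choose k * (m - k).choose (n - 2 * k) * (u + v) ^ (n - 2 * k) * (u * v) ^ k := by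
  calc _ = ((1 + C u * X) ^ m * (1 + C v * X) ^ m).coeff n := by
        rw [coeff_mul, Nat.sum_antidiagonal_eq_sum_range_succ_mk]
        simp only [coeff_one_add_C_mul_X_pow]
        exact sum_congr rfl fun a _ => by ring
    _ = ((1 + C (u + v) * X + C (u * v) * X ^ 2) ^ m).coeff n := by
        rw [← mul_pow, C_add, C_mul]; ring_nf
    _ = _ := coeff_one_add_C_mul_X_add_C_mul_X_sq_pow _ _ m n

theorem two_mul_add_one_mul_catalan_eq_choose (k : ℕ) :
    (2 * k + 1) * catalan k = (2 * k + 1).choose k := by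
  apply Nat.eq_of_mul_eq_mul_right (by positivity : 0 < k + 1)
  rw [← Nat.choose_symm_half, ← Nat.add_one_mul_choose_eq, ← Nat.centralBinom_eq_two_mul_choose,
    ← succ_mul_catalan_eq_centralBinom]
  ring

theorem add_one_mul_choose_mul_catalan_eq {n k : ℕ} (hk : 2 * k ≤ n) :
    (n + 1) * n.choose (2 * k) * catalan k =
      (n + 1).choose k * (n + 1 - k).choose (n - 2 * k) := by
  calc _ = (n + 1).choose (2 * k + 1) * ((2 * k + 1) * catalan k) := by
        rw [Nat.add_one_mul_choose_eq]; ring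
    _ = (n + 1).choose k * (n + 1 - k).choose (k + 1) := by
        rw [two_mul_add_one_mul_catalan_eq_choose, Nat.choose_mul (by omega)]
        congr 2; omega
    _ = _ := by
        congr 1; exact Nat.choose_symm_of_eq_add (by omega)

theorem schroeder_trinomial_form (n : ℕ) :
    (∑ k ∈ range (n / 2 + 1),
        C ((n.choose (2 * k) : ℚ) * (catalan k : ℚ)) *
          (2 * X + 1) ^ (n - 2 * k) * (X * (X + 1)) ^ k) =
    ∑ j ∈ Icc 1 (n + 1),
      C ((1 / ((n : ℚ) + 1)) * ((n + 1).choose j : ℚ) * ((n + 1).choose (j - 1) : ℚ)) *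
        X ^ (j - 1) * (X + 1) ^ (n + 1 - j) := by
  apply mul_left_cancel₀ (Nat.cast_add_one_ne_zero n)
  rw [← Ico_add_one_right_eq_Icc, sum_Ico_eq_sum_range, Nat.add_sub_cancel, mul_sum, mul_sum]
  convert (sum_choose_mul_choose_mul_pow_eq_sum_add_pow (X : ℚ[X]) (X + 1) (n + 1) n).symm
    using 1
  · refine sum_congr rfl fun k hk => ?_
    have h := congrArg (Nat.cast : ℕ → ℚ[X])
      (add_one_mul_choose_mul_catalan_eq (by simp at hk; omega : 2 * k ≤ n))
    push_cast at h
    rw [← h, map_mul, map_natCast, map_natCast]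
    ring
  · refine sum_congr rfl fun a ha => ?_
    have hsymm : (n + 1).choose (1 + a) = (n + 1).choose (n - a) :=
      Nat.choose_symm_of_eq_add (by simp at ha; omega)
    rw [Nat.add_sub_cancel_left, show n + 1 - (1 + a) = n - a by omega, hsymm,
      show ((n : ℚ[X]) + 1) = C ((n : ℚ) + 1) by simp, ← mul_assoc, ← mul_assoc,
      ← C_mul, ← mul_assoc, ← mul_assoc, mul_one_div_cancel (by positivity), one_mul]
    simp only [map_mul, map_natCast]
    ring
end

section
/- For every positive integer n, (1/n)·∑_{k=0}^{n−1} T_k·M_k·(−3)^{n−1−k} is an integer, where T_k = ∑_{j=0}^{⌊k/2⌋} C(k,2j)C(2j,j) is the k-th central trinomial coefficient and M_k = ∑_{j=0}^{⌊k/2⌋} C(k,2j)·C_j is the k-th Motzkin number. -/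
/-!
Both sequences are transforms `∑ⱼ C(n, 2j) wⱼ` of weights with `(j + 1 + m) wⱼ₊₁ = 2(2j + 1) wⱼ`
(`m = 0` for `C(2j, j)`, `m = 1` for Catalan numbers), which forces the three-term recurrences
`(n + 2) Tₙ₊₂ = (2n + 3) Tₙ₊₁ + 3(n + 1) Tₙ` and `(n + 4) Mₙ₊₂ = (2n + 5) Mₙ₊₁ + 3(n + 1) Mₙ`.
With these, the sum `∑_{k<n} Tₖ Mₖ (-3)^(n-1-k)` telescopes to
`n ((n + 2) Tₙ₋₁ Mₙ - (n + 1) Tₙ Mₙ₋₁)`, visibly a multiple of `n`.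
-/

open Finset

theorem choose_add_two_combination (n k : ℕ) (m : ℤ) :
    ((k : ℤ) + 1) * ((n + 2 + 2 * m) * ((n + 2).choose (k + 2) : ℤ)
        + (n + 1) * (n.choose (k + 2) : ℤ) - (2 * n + 3 + 2 * m) * ((n + 1).choose (k + 2) : ℤ))
      = (n + 1) * (k + 2 + 2 * m) * (n.choose k : ℤ) := by
  have h : ((n : ℤ) + 1) * n.choose k = (n + 1).choose (k + 1) * (k + 1) := by
    exact_mod_cast Nat.add_one_mul_choose_eq n k
  simp only [Nat.choose_succ_succ] at h ⊢
  push_cast at h ⊢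
  linear_combination -(1 + 2 * m) * h

def evenChooseSum (w : ℕ → ℤ) (n : ℕ) : ℤ :=
  ∑ j ∈ range (n / 2 + 1), (n.choose (2 * j) : ℤ) * w j

theorem evenChooseSum_eq_sum_range (w : ℕ → ℤ) {n N : ℕ} (h : n / 2 + 1 ≤ N) :
    evenChooseSum w n = ∑ j ∈ range N, (n.choose (2 * j) : ℤ) * w j := by
  refine sum_subset (range_subset_range.2 h) fun j _ hj => ?_
  rw [Nat.choose_eq_zero_of_lt (by simp at hj; omega), Nat.cast_zero, zero_mul]

theorem evenChooseSum_add_two (w : ℕ → ℤ) (m : ℕ)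
    (hw : ∀ j : ℕ, ((j : ℤ) + 1 + m) * w (j + 1) = 2 * (2 * j + 1) * w j) (n : ℕ) :
    ((n : ℤ) + 2 + 2 * m) * evenChooseSum w (n + 2)
      = (2 * n + 3 + 2 * m) * evenChooseSum w (n + 1) + 3 * (n + 1) * evenChooseSum w n := by
  have term (j : ℕ) :
      ((n : ℤ) + 2 + 2 * m) * ((n + 2).choose (2 * (j + 1)) * w (j + 1))
        + (n + 1) * (n.choose (2 * (j + 1)) * w (j + 1))
        - (2 * n + 3 + 2 * m) * ((n + 1).choose (2 * (j + 1)) * w (j + 1))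
      = 4 * (n + 1) * (n.choose (2 * j) * w j) := by
    have hc := choose_add_two_combination n (2 * j) m
    apply mul_left_cancel₀ (by positivity : ((j : ℤ) + 1 + m) ≠ 0)
    rw [show 2 * (j + 1) = 2 * j + 2 by ring]
    push_cast at hc ⊢
    linear_combination ((n + 1 : ℤ) * n.choose (2 * j + 2)
      + (n + 2 + 2 * m) * (n + 2).choose (2 * j + 2)
      - (2 * n + 3 + 2 * m) * (n + 1).choose (2 * j + 2)) * hw j + 2 * w j * hc
  have sum_identity :
      ((n : ℤ) + 2 + 2 * m) * evenChooseSum w (n + 2) + (n + 1) * evenChooseSum w n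
        - (2 * n + 3 + 2 * m) * evenChooseSum w (n + 1) = 4 * (n + 1) * evenChooseSum w n := by
    conv_lhs => rw [evenChooseSum_eq_sum_range w (N := n / 2 + 2) (n := n + 2) (by omega),
      evenChooseSum_eq_sum_range w (N := n / 2 + 2) (n := n + 1) (by omega),
      evenChooseSum_eq_sum_range w (N := n / 2 + 2) (n := n) (by omega)]
    rw [evenChooseSum, mul_sum, mul_sum, mul_sum, mul_sum, ← sum_add_distrib, ← sum_sub_distrib,
      sum_range_succ']
    simp only [term, mul_zero, Nat.choose_zero_right]
    push_cast
    ring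
  linear_combination sum_identity

theorem add_one_mul_choose_two_mul_succ (j : ℕ) :
    ((j : ℤ) + 1) * ((2 * (j + 1)).choose (j + 1) : ℤ)
      = 2 * (2 * j + 1) * ((2 * j).choose j : ℤ) := by
  simpa [← Nat.centralBinom_eq_two_mul_choose] using
    congrArg (Nat.cast (R := ℤ)) (Nat.succ_mul_centralBinom_succ j)

theorem add_two_mul_catalan_succ (j : ℕ) :
    ((j : ℤ) + 2) * (catalan (j + 1) : ℤ) = 2 * (2 * j + 1) * (catalan j : ℤ) := by
  have h₁ : ((j : ℤ) + 2) * catalan (j + 1) = (j + 1).centralBinom := by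
    exact_mod_cast succ_mul_catalan_eq_centralBinom (j + 1)
  have h₀ : ((j : ℤ) + 1) * catalan j = j.centralBinom := by
    exact_mod_cast succ_mul_catalan_eq_centralBinom j
  have hb : ((j : ℤ) + 1) * (j + 1).centralBinom = 2 * (2 * j + 1) * j.centralBinom := by
    exact_mod_cast Nat.succ_mul_centralBinom_succ j
  apply mul_left_cancel₀ (by positivity : ((j : ℤ) + 1) ≠ 0)
  linear_combination ((j : ℤ) + 1) * h₁ + hb - 2 * (2 * j + 1) * h₀

def centralTrinomial (n : ℕ) : ℤ := evenChooseSum (fun j => ((2 * j).choose j : ℤ)) n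

def motzkin (n : ℕ) : ℤ := evenChooseSum (fun j => (catalan j : ℤ)) n

theorem centralTrinomial_add_two (n : ℕ) :
    ((n : ℤ) + 2) * centralTrinomial (n + 2)
      = (2 * n + 3) * centralTrinomial (n + 1) + 3 * (n + 1) * centralTrinomial n := by
  unfold centralTrinomial
  simpa using
    evenChooseSum_add_two _ 0 (fun j => by simpa using add_one_mul_choose_two_mul_succ j) n

theorem motzkin_add_two (n : ℕ) :
    ((n : ℤ) + 4) * motzkin (n + 2) = (2 * n + 5) * motzkin (n + 1) + 3 * (n + 1) * motzkin n := by
  unfold motzkin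
  have h := evenChooseSum_add_two (fun j => (catalan j : ℤ)) 1
    (fun j => by push_cast; linear_combination add_two_mul_catalan_succ j) n
  push_cast at h
  linear_combination h

theorem sum_mul_neg_three_pow_eq {R : Type*} [CommRing R] {T M : ℕ → R}
    (hT : ∀ n : ℕ, ((n : R) + 2) * T (n + 2) = (2 * n + 3) * T (n + 1) + 3 * (n + 1) * T n)
    (hM : ∀ n : ℕ, ((n : R) + 4) * M (n + 2) = (2 * n + 5) * M (n + 1) + 3 * (n + 1) * M n)
    (hT₀ : T 0 = 1) (hT₁ : T 1 = 1) (hM₀ : M 0 = 1) (hM₁ : M 1 = 1) (N : ℕ) :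
    ∑ k ∈ range (N + 1), T k * M k * (-3) ^ (N - k)
      = (N + 1) * ((N + 3) * T N * M (N + 1) - (N + 2) * T (N + 1) * M N) := by
  induction N with
  | zero => norm_num [hT₀, hT₁, hM₀, hM₁]
  | succ N ih =>
    have shift : ∑ k ∈ range (N + 1), T k * M k * (-3) ^ (N + 1 - k)
        = (∑ k ∈ range (N + 1), T k * M k * (-3) ^ (N - k)) * (-3) := by
      rw [sum_mul]
      refine sum_congr rfl fun k hk => ?_
      rw [Nat.sub_add_comm (Nat.lt_succ_iff.1 (mem_range.1 hk)), pow_succ]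
      ring
    rw [sum_range_succ, shift, ih, Nat.sub_self, pow_zero]
    push_cast
    linear_combination (N + 3 : R) * M (N + 1) * hT N - (N + 2 : R) * T (N + 1) * hM N

theorem n_dvd_sum_trinomial_motzkin_general (n : ℕ) :
    (n : ℤ) ∣ ∑ k ∈ range n,
        ((∑ j ∈ range (k / 2 + 1), (k.choose (2 * j) : ℤ) * ((2 * j).choose j : ℤ)) *
          (∑ j ∈ range (k / 2 + 1), (k.choose (2 * j) : ℤ) * (catalan j : ℤ)) *
          (-3 : ℤ) ^ (n - 1 - k)) := by
  rcases n with _ | N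
  · simp
  · have h := sum_mul_neg_three_pow_eq centralTrinomial_add_two motzkin_add_two
      (by simp [centralTrinomial, evenChooseSum]) (by simp [centralTrinomial, evenChooseSum])
      (by simp [motzkin, evenChooseSum]) (by simp [motzkin, evenChooseSum]) N
    simp only [Nat.add_sub_cancel]
    exact ⟨_, by push_cast; exact h⟩

theorem n_dvd_sum_trinomial_motzkin (n : ℕ) (hn : 1 ≤ n) :
    (n : ℤ) ∣ ∑ k ∈ range n,
        ((∑ j ∈ range (k / 2 + 1), (k.choose (2 * j) : ℤ) * ((2 * j).choose j : ℤ)) *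
          (∑ j ∈ range (k / 2 + 1), (k.choose (2 * j) : ℤ) * (catalan j : ℤ)) *
          (-3 : ℤ) ^ (n - 1 - k)) :=
  n_dvd_sum_trinomial_motzkin_general n
end

section
/- For all integers n ≥ m ≥ 1, ∑_{k=m}^n (−1)^{n−k}·C(k−1,m−1)·w(n,k) = w(n,m), where w(n,k) = (1/k)·C(n−1,k−1)·C(n+k,k−1). -/
/-!
Shift `n, m, k` down to `ν, μ, κ` and replace the sign `(-1) ^ (n - k)` by `(-1) ^ κ`, which
changes the sum by the factor `(-1) ^ ν`. Writing `w_μ = w(n, μ + 1)` and `F μ κ` for the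
resulting summand, consecutive values of `μ` form a Wilf–Zeilberger pair:
`w_μ F (μ + 1) κ - w_(μ+1) F μ κ = G μ (κ + 1) - G μ κ` for the certificate
`G μ κ = w_μ (κ + 1) (κ - μ) / ((μ + 1) (μ + 2)) F μ κ`, a rational identity in the binomial
coefficients. Summing over `μ ≤ κ ≤ ν` telescopes to zero because `G` vanishes at both ends, so
`∑ κ, F μ κ / w_μ` does not depend on `μ`; at `μ = ν` the sum is the single term `(-1) ^ ν w_ν`.
-/

open Finset

section CastChoose

variable {K : Type*} [Field K] [CharZero K]

theorem Nat.cast_choose_succ_right (n k : ℕ) :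
    (n.choose (k + 1) : K) = n.choose k * (n - k) / (k + 1) := by
  rw [eq_div_iff (Nat.cast_add_one_ne_zero k)]
  rcases le_or_gt k n with hkn | hnk
  · exact_mod_cast Nat.choose_succ_right_eq n k
  · simp [Nat.choose_eq_zero_of_lt hnk, Nat.choose_eq_zero_of_lt (Nat.lt_succ_of_lt hnk)]

theorem Nat.cast_succ_choose_succ (n k : ℕ) :
    ((n + 1).choose (k + 1) : K) = (n + 1) * n.choose k / (k + 1) := by
  rw [eq_div_iff (Nat.cast_add_one_ne_zero k)]
  exact_mod_cast (Nat.add_one_mul_choose_eq n k).symm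

theorem Nat.cast_succ_choose {n k : ℕ} (h : k ≤ n) :
    ((n + 1).choose k : K) = n.choose k * (n + 1) / (n + 1 - k) := by
  have hsub : ((n + 1 - k : ℕ) : K) = n + 1 - k := by
    rw [Nat.cast_sub (by omega), Nat.cast_succ]
  rw [← hsub, eq_div_iff (Nat.cast_ne_zero.2 (by omega))]
  exact_mod_cast (Nat.choose_mul_succ_eq n k).symm

end CastChoose

theorem neg_one_pow_sub_of_le {R : Type*} [CommRing R] {a b : ℕ} (h : b ≤ a) :
    (-1 : R) ^ (a - b) = (-1) ^ a * (-1) ^ b := by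
  obtain ⟨d, rfl⟩ := Nat.exists_eq_add_of_le h
  rw [Nat.add_sub_cancel_left, pow_add, mul_right_comm, ← mul_pow, neg_one_mul, neg_neg, one_pow,
    one_mul]

/-- `wShifted ν κ = w(ν + 1, κ + 1)`; the shift removes every truncated subtraction. -/
def wShifted (ν κ : ℕ) : ℚ := ν.choose κ * (ν + κ + 2).choose κ / (κ + 1)

def wzTerm (ν μ κ : ℕ) : ℚ := (-1) ^ κ * κ.choose μ * wShifted ν κ

def wzCert (ν μ κ : ℕ) : ℚ :=
  wShifted ν μ * (κ + 1) * (κ - μ) / ((μ + 1) * (μ + 2)) * wzTerm ν μ κ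

theorem wShifted_pos {ν μ : ℕ} (h : μ ≤ ν) : 0 < wShifted ν μ := by
  have h₁ : (0 : ℚ) < ν.choose μ := by exact_mod_cast Nat.choose_pos h
  have h₂ : (0 : ℚ) < (ν + μ + 2).choose μ := by exact_mod_cast Nat.choose_pos (by omega)
  unfold wShifted
  positivity

theorem wz_pair {ν μ κ : ℕ} (h : μ ≤ κ) :
    wShifted ν μ * wzTerm ν (μ + 1) κ - wShifted ν (μ + 1) * wzTerm ν μ κ =
      wzCert ν μ (κ + 1) - wzCert ν μ κ := by
  simp only [wzCert, wzTerm, wShifted]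
  rw [show ν + (μ + 1) + 2 = ν + μ + 2 + 1 by ring, show ν + (κ + 1) + 2 = ν + κ + 2 + 1 by ring,
    Nat.cast_choose_succ_right ν μ, Nat.cast_choose_succ_right κ μ,
    Nat.cast_choose_succ_right ν κ, Nat.cast_succ_choose_succ (ν + μ + 2) μ,
    Nat.cast_succ_choose_succ (ν + κ + 2) κ, Nat.cast_succ_choose h]
  have : (κ + 1 - μ : ℚ) ≠ 0 := by
    have : (μ : ℚ) ≤ κ := by exact_mod_cast h
    linarith
  push_cast
  field_simp
  ring

theorem wShifted_mul_sum_wzTerm_succ {ν μ : ℕ} (h : μ ≤ ν) :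
    wShifted ν μ * ∑ κ ∈ Icc (μ + 1) ν, wzTerm ν (μ + 1) κ =
      wShifted ν (μ + 1) * ∑ κ ∈ Icc μ ν, wzTerm ν μ κ := by
  have hext : ∑ κ ∈ Icc (μ + 1) ν, wzTerm ν (μ + 1) κ = ∑ κ ∈ Icc μ ν, wzTerm ν (μ + 1) κ := by
    rw [Icc_eq_cons_Ioc h, sum_cons, wzTerm, Nat.choose_succ_self, ← Icc_add_one_left_eq_Ioc]
    simp
  rw [hext, mul_sum, mul_sum, ← sub_eq_zero, ← sum_sub_distrib,
    sum_congr rfl fun κ hκ => wz_pair (mem_Icc.1 hκ).1, sum_Icc_sub h]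
  simp [wzCert, wzTerm, wShifted]

theorem sum_wzTerm {ν μ : ℕ} (h : μ ≤ ν) :
    ∑ κ ∈ Icc μ ν, wzTerm ν μ κ = (-1) ^ ν * wShifted ν μ := by
  induction h using Nat.decreasingInduction with
  | self => simp [wzTerm]
  | of_succ μ hμ ih =>
    refine mul_left_cancel₀ (wShifted_pos hμ).ne' ?_
    rw [← wShifted_mul_sum_wzTerm_succ hμ.le, ih]
    ring

theorem w_alternating_sum (m n : ℕ) (hm : 1 ≤ m) (hmn : m ≤ n) :
    ∑ k ∈ Icc m n, (-1 : ℚ) ^ (n - k) * ((k - 1).choose (m - 1) : ℚ) *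
        (((n - 1).choose (k - 1) : ℚ) * ((n + k).choose (k - 1) : ℚ) / (k : ℚ)) =
    ((n - 1).choose (m - 1) : ℚ) * ((n + m).choose (m - 1) : ℚ) / (m : ℚ) := by
  obtain ⟨μ, rfl⟩ := Nat.exists_eq_add_of_le' hm
  obtain ⟨ν, rfl⟩ : ∃ ν, n = ν + 1 := ⟨n - 1, by omega⟩
  have hμν : μ ≤ ν := by omega
  rw [← image_add_right_Icc, sum_image (by simp)]
  calc _ = ∑ κ ∈ Icc μ ν, (-1) ^ ν * wzTerm ν μ κ := sum_congr rfl fun κ hκ => by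
          rw [Nat.add_sub_add_right, neg_one_pow_sub_of_le (mem_Icc.1 hκ).2]
          simp only [wzTerm, wShifted]
          push_cast
          ring_nf
    _ = _ := by
      rw [← mul_sum, sum_wzTerm hμν, ← mul_assoc, ← pow_add, Even.neg_one_pow ⟨ν, rfl⟩, one_mul,
        wShifted]
      push_cast
      ring_nf
end
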